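/- For every n and every nonnegative q : {-1,1}^n → ℝ with E_z[q(z)] = 1, one has max_{S ⊆ [n]} |(OR_n · q)^(S)| ≥ 1/3, where OR_n(z) = 1 if z = (1,...,1) and -1 otherwise. -/

import Mathlib

/-!
Write `M` for the largest Fourier coefficient of `F = OR_n · q`, `1` for the all-ones point and
`t = q(1) / 2^n`. Fourier inversion at `1` gives `q(1) = F(1) = ∑_S F^(S) ≤ 2^n M`, so `t ≤ M`;
the empty coefficient is `F^(∅) = E[F] = 2t - 1`, so `1 - 2t ≤ M`. Adding twice the first
inequality to the second gives `3M ≥ 1`.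
-/

open Finset

/-- The map identifying a bit with `±1`: `false ↦ 1`, `true ↦ -1`. -/
noncomputable def chi (b : Bool) : ℝ := if b then -1 else 1

/-- Fourier coefficient `F^(S) = E_z[F(z) ∏_{i∈S} z_i]`. -/
noncomputable def fCoeff {n : ℕ} (F : (Fin n → Bool) → ℝ) (S : Finset (Fin n)) : ℝ :=
  (1 / 2 ^ n) * ∑ z : Fin n → Bool, F z * ∏ i ∈ S, chi (z i)

/-- `max_{S ⊆ [n]} |F^(S)|`. -/
noncomputable def maxAbsFCoeff {n : ℕ} (F : (Fin n → Bool) → ℝ) : ℝ :=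
  Finset.univ.sup' Finset.univ_nonempty (fun S : Finset (Fin n) => |fCoeff F S|)

/-- `OR_n(z) = 1` iff `z = (1,…,1)` (all bits false), and `-1` otherwise. -/
noncomputable def ORn (n : ℕ) : (Fin n → Bool) → ℝ :=
  fun z => if (∀ i, z i = false) then 1 else -1

theorem sum_prod_chi {ι : Type*} [Fintype ι] [DecidableEq ι] (z : ι → Bool) :
    ∑ S : Finset ι, ∏ i ∈ S, chi (z i)
      = if z = fun _ => false then (2 : ℝ) ^ Fintype.card ι else 0 := by
  have hexpand := prod_add (fun i => chi (z i)) (fun _ => (1 : ℝ)) univ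
  simp only [prod_const_one, mul_one] at hexpand
  rw [← powerset_univ, ← hexpand]
  split_ifs with hz
  · subst hz
    norm_num [chi]
  · obtain ⟨i, hi⟩ : ∃ i, z i = true := by
      by_contra! hfalse
      exact hz (funext fun i => by simpa using hfalse i)
    exact prod_eq_zero (mem_univ i) (by norm_num [chi, hi])

section Fourier

variable {n : ℕ}

theorem fCoeff_empty (F : (Fin n → Bool) → ℝ) :
    fCoeff F ∅ = (1 / 2 ^ n) * ∑ z, F z := by
  simp only [fCoeff, prod_empty, mul_one]

theorem sum_fCoeff (F : (Fin n → Bool) → ℝ) :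
    ∑ S, fCoeff F S = F fun _ => false := by
  simp only [fCoeff, ← mul_sum]
  rw [sum_comm]
  simp only [← mul_sum, sum_prod_chi, Fintype.card_fin, mul_ite, mul_zero, sum_ite_eq',
    mem_univ, if_true]
  field_simp

theorem abs_fCoeff_le_maxAbsFCoeff (F : (Fin n → Bool) → ℝ) (S : Finset (Fin n)) :
    |fCoeff F S| ≤ maxAbsFCoeff F :=
  le_sup' (fun S => |fCoeff F S|) (mem_univ S)

theorem le_two_pow_mul_maxAbsFCoeff (F : (Fin n → Bool) → ℝ) :
    F (fun _ => false) ≤ 2 ^ n * maxAbsFCoeff F :=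
  calc F (fun _ => false) = ∑ S, fCoeff F S := (sum_fCoeff F).symm
    _ ≤ ∑ _S : Finset (Fin n), maxAbsFCoeff F :=
      sum_le_sum fun S _ => (le_abs_self _).trans (abs_fCoeff_le_maxAbsFCoeff F S)
    _ = 2 ^ n * maxAbsFCoeff F := by simp [Fintype.card_finset]

end Fourier

theorem sum_ORn_mul (n : ℕ) (q : (Fin n → Bool) → ℝ) :
    ∑ z, ORn n z * q z = 2 * q (fun _ => false) - ∑ z, q z := by
  have hsplit : ∀ z, ORn n z * q z = (if z = fun _ => false then 2 * q z else 0) - q z := by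
    intro z
    by_cases hz : z = fun _ => false
    · subst hz
      norm_num [ORn]
      ring
    · have hne : ¬ ∀ i, z i = false := fun hall => hz (funext hall)
      simp [ORn, hne, hz]
  simp only [hsplit, sum_sub_distrib, sum_ite_eq', mem_univ, if_true]

theorem orn_max_fourier_ge_third_general (n : ℕ) (q : (Fin n → Bool) → ℝ)
    (hq1 : (1 / 2 ^ n) * ∑ z : Fin n → Bool, q z = 1) :
    (1 / 3 : ℝ) ≤ maxAbsFCoeff (fun z => ORn n z * q z) := by
  set F : (Fin n → Bool) → ℝ := fun z => ORn n z * q z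
  set t : ℝ := q (fun _ => false) / 2 ^ n
  have hpow : (0 : ℝ) < 2 ^ n := by positivity
  have ht : t ≤ maxAbsFCoeff F := by
    have hF : F (fun _ => false) = q (fun _ => false) := by simp [F, ORn]
    have := le_two_pow_mul_maxAbsFCoeff F
    rw [hF] at this
    rwa [div_le_iff₀ hpow, mul_comm]
  have hempty : fCoeff F ∅ = 2 * t - 1 := by
    rw [fCoeff_empty, sum_ORn_mul, mul_sub, hq1]
    ring
  have habs := abs_fCoeff_le_maxAbsFCoeff F ∅
  rw [hempty] at habs
  linarith [neg_abs_le (2 * t - 1)]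

/-- For every `n` and every density `q ≥ 0` with `E[q] = 1`,
`max_S |(OR_n·q)^(S)| ≥ 1/3`. -/
theorem orn_max_fourier_ge_third (n : ℕ) (q : (Fin n → Bool) → ℝ)
    (hq : ∀ z, 0 ≤ q z) (hq1 : (1 / 2 ^ n) * ∑ z : Fin n → Bool, q z = 1) :
    (1 / 3 : ℝ) ≤ maxAbsFCoeff (fun z => ORn n z * q z) :=
  orn_max_fourier_ge_third_general n q hq1
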